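/- arXiv:1309.2685 — 2 statements merged into one kernel-verified Lean document; each statement's English description precedes it below -/
import Mathlib

section
/- Let P be a finite poset with realizer {Λ₁, Λ₂}, Q the complementary poset, and v the valuation on the downset lattice L of P given by weights w(x) = number of chains in Q with maximum element x. Then v is complete: for every initial segment T of L (subset whose v-image is {0,…,j-1}), the set of all joins (unions) of subsets of T is an initial segment, and for every final segment of L the set of all meets (intersections) is a final segment. -/
open Finset

variable (P : Type*) [PartialOrder P] [Fintype P] [DecidableEq P]

/-- The lattice of downsets (lower sets) of a finite poset `P`. -/
def DownSet : Type _ := {A : Finset P // IsLowerSet (↑A : Set P)}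

variable {P}

instance : Lattice (DownSet P) :=
  Subtype.lattice (fun _ _ hA hB => by simpa [Finset.sup_eq_union] using hA.union hB)
    (fun _ _ hA hB => by simpa [Finset.inf_eq_inter] using hA.inter hB)

instance : OrderBot (DownSet P) :=
  Subtype.orderBot (by simp [Finset.bot_eq_empty, isLowerSet_empty])

noncomputable instance : Fintype (DownSet P) :=
  Fintype.ofInjective Subtype.val Subtype.val_injective

/-- The valuation associated to a weight function `w`. -/
def vval (w : P → ℕ) (A : DownSet P) : ℕ := ∑ x ∈ A.1, w x

variable [DecidableRel ((· ≤ ·) : P → P → Prop)]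

/-- The principal downset of `y`. -/
def pd (y : P) : DownSet P :=
  ⟨univ.filter (· ≤ y), by
    intro a b hba ha
    simp only [coe_filter, Set.mem_setOf_eq, mem_univ, true_and] at *
    exact hba.trans ha⟩

/-- The dual valuation evaluated on the principal upset of `x`. -/
def vup (w : P → ℕ) (x : P) : ℕ := ∑ z ∈ univ.filter (fun z => x ≤ z), w z

/-- `T` is an initial segment for the valuation `v`. -/
def Initial (v : DownSet P → ℕ) (T : Set (DownSet P)) : Prop :=
  ∃ j, v '' T = {k | k < j}

/-- `T` is a final segment for the valuation `v`. -/
def Final (v : DownSet P → ℕ) (T : Set (DownSet P)) : Prop :=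
  ∃ j, v '' T = {k | j ≤ k ∧ k < Fintype.card (DownSet P)}

/-- The set of arbitrary (nonempty) joins of elements of `T`. -/
def joinSet (T : Set (DownSet P)) : Set (DownSet P) :=
  {a | ∃ S : Finset (DownSet P), ↑S ⊆ T ∧ ∃ hS : S.Nonempty, a = S.sup' hS id}

/-- The set of arbitrary (nonempty) meets of elements of `T`. -/
def meetSet (T : Set (DownSet P)) : Set (DownSet P) :=
  {a | ∃ S : Finset (DownSet P), ↑S ⊆ T ∧ ∃ hS : S.Nonempty, a = S.inf' hS id}

/-- A complete valuation: bijective onto `{0,…,|L|-1}`, join-closures of initial segments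
are initial segments, meet-closures of final segments are final segments. -/
def IsCompleteValuation (w : P → ℕ) : Prop :=
  Set.BijOn (vval w) Set.univ {k | k < Fintype.card (DownSet P)} ∧
  (∀ T, Initial (vval w) T → Initial (vval w) (joinSet T)) ∧
  (∀ T, Final (vval w) T → Final (vval w) (meetSet T))

/-- The complementary order from two linear orders: `x ≤' y` iff `le1 x y` and `le2 y x`. -/
def le'' (le1 le2 : P → P → Prop) (x y : P) : Prop := le1 x y ∧ le2 y x

/-- The number of chains (under the complementary order) with maximum element `y`. -/
noncomputable def chainCount (le1 le2 : P → P → Prop) (y : P) : ℕ :=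
  Set.ncard {C : Finset P | y ∈ C ∧ (∀ a ∈ C, le'' le1 le2 a y) ∧
    ∀ a ∈ C, ∀ b ∈ C, le'' le1 le2 a b ∨ le'' le1 le2 b a}

/-- `{le1, le2}` is a realizer of `P`. -/
def IsRealizer (le1 le2 : P → P → Prop) : Prop :=
  IsLinearOrder P le1 ∧ IsLinearOrder P le2 ∧ ∀ x y : P, x ≤ y ↔ le1 x y ∧ le2 x y

/-!
Write the realizer as injective `f g : P → ℕ` with `x ≤ y ↔ f x ≤ f y ∧ g x ≤ g y`; then
`a ≤' b ↔ f a ≤ f b ∧ g b ≤ g a`. Order downsets colexicographically by their `f`-images. The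
valuation is the rank of a downset `A` in this linear order, by induction on the `f`-largest
element `t` of `A`: chains with top `t` give `w t = 1 + ∑_{a <' t} w a`, and `{a | a <' t}` is
`{f < f t} \ {< t}`; on the other side, the downsets preceding `A` either avoid `t` (these are the
downsets of `{f < f t}`), or contain `t` and, after removing it, lie between `{< t}` and
`A \ {t}`. Two-dimensionality is what makes every downset of `{f < f t}` not containing `{< t}`
precede it.

Initial and final segments are thus the colex-down- and up-closed families. Joins of such a `T`
are the downsets all of whose principal downsets lie in `T`, and meets are those `C` with
`notAbove x ∈ T` for `x ∉ C`. Both conditions are colex-closed because principal downsets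
increase along `f` and the `notAbove x` decrease along `g`.
-/

open Function

theorem exists_nat_encoding_of_isLinearOrder {α : Type*} [Fintype α] (r : α → α → Prop)
    [IsLinearOrder α r] :
    ∃ f : α → ℕ, Injective f ∧ ∀ x y, r x y ↔ f x ≤ f y := by
  classical
  let f x := #{y | r y x}
  have hiff : ∀ x y, r x y ↔ f x ≤ f y := by
    intro x y
    refine ⟨fun hxy => card_le_card fun z hz => ?_, fun hle => by_contra fun hxy => ?_⟩
    · simp only [mem_filter, mem_univ, true_and] at hz ⊢
      exact _root_.trans hz hxy
    · have hyx : r y x := (total_of r x y).resolve_left hxy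
      have hlt : f y < f x := by
        refine card_lt_card ⟨fun z hz => ?_, fun hsub => hxy ?_⟩
        · simp only [mem_filter, mem_univ, true_and] at hz ⊢
          exact _root_.trans hz hyx
        · simpa using hsub (by simpa using refl_of r x)
      omega
  exact ⟨f, fun x y hxy => antisymm ((hiff x y).2 hxy.le) ((hiff y x).2 hxy.ge), hiff⟩

theorem IsRealizer.exists_coords {α : Type*} [PartialOrder α] [Fintype α]
    {le1 le2 : α → α → Prop} (h : IsRealizer le1 le2) :
    ∃ f g : α → ℕ, Injective f ∧ Injective g ∧
      le1 = (fun x y => f x ≤ f y) ∧ le2 = (fun x y => g x ≤ g y) := by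
  obtain ⟨h1, h2, -⟩ := h
  obtain ⟨f, hf, hf'⟩ := exists_nat_encoding_of_isLinearOrder le1
  obtain ⟨g, hg, hg'⟩ := exists_nat_encoding_of_isLinearOrder le2
  exact ⟨f, g, hf, hg, by ext; exact hf' _ _, by ext; exact hg' _ _⟩

section Rank

variable {ι γ : Type*} [Fintype ι] [LinearOrder γ] {κ : ι → γ}

def rankBy (κ : ι → γ) (a : ι) : ℕ := #{b | κ b < κ a}

theorem rankBy_le_rankBy_iff {a b : ι} :
    rankBy κ a ≤ rankBy κ b ↔ κ a ≤ κ b := by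
  refine ⟨fun h => le_of_not_gt fun hba => h.not_gt ?_, fun h => ?_⟩
  · refine card_lt_card ⟨fun c hc => ?_, fun hsub => ?_⟩
    · simp only [mem_filter, mem_univ, true_and] at hc ⊢
      exact hc.trans hba
    · simpa using hsub (show b ∈ univ.filter (κ · < κ a) by simpa using hba)
  · exact card_le_card fun c hc => by
      simp only [mem_filter, mem_univ, true_and] at hc ⊢
      exact hc.trans_le h

theorem rankBy_injective (hκ : Injective κ) : Injective (rankBy κ) := fun _ _ hab =>
  hκ (le_antisymm (rankBy_le_rankBy_iff.1 hab.le) (rankBy_le_rankBy_iff.1 hab.ge))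

theorem card_filter_le_eq_rankBy_add_one (hκ : Injective κ) (a : ι) :
    #{b | κ b ≤ κ a} = rankBy κ a + 1 := by
  classical
  have : univ.filter (fun b => κ b ≤ κ a) = insert a (univ.filter fun b => κ b < κ a) := by
    ext b
    simp [le_iff_lt_or_eq, hκ.eq_iff, or_comm]
  rw [this, card_insert_of_notMem (by simp), rankBy]

theorem bijOn_rankBy (hκ : Injective κ) :
    Set.BijOn (rankBy κ) Set.univ {k | k < Fintype.card ι} := by
  have hmaps : Set.MapsTo (rankBy κ) Set.univ {k | k < Fintype.card ι} :=
    fun a _ => card_lt_univ_of_notMem (x := a) (by simp)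
  have himage : univ.image (rankBy κ) = range (Fintype.card ι) :=
    eq_of_subset_of_card_le (fun k hk => by
        obtain ⟨a, -, rfl⟩ := mem_image.1 hk
        exact mem_range.2 (hmaps trivial))
      (by rw [card_range, card_image_of_injective _ (rankBy_injective hκ), card_univ])
  refine ⟨hmaps, (rankBy_injective hκ).injOn, fun k hk => ?_⟩
  obtain ⟨a, -, rfl⟩ := mem_image.1 (himage ▸ mem_range.2 hk)
  exact ⟨a, trivial, rfl⟩

end Rank

section Segments

variable {α : Type*} [PartialOrder α] [Fintype α] {v : DownSet α → ℕ} {X : Set (DownSet α)}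

theorem initial_iff_forall_le (hv : Set.BijOn v Set.univ {k | k < Fintype.card (DownSet α)}) :
    Initial v X ↔ ∀ A ∈ X, ∀ B, v B ≤ v A → B ∈ X := by
  constructor
  · rintro ⟨j, hj⟩ A hA B hBA
    have hAj : v A ∈ v '' X := ⟨A, hA, rfl⟩
    rw [hj] at hAj
    have hBj : v B ∈ v '' X := by
      rw [hj]
      exact lt_of_le_of_lt hBA hAj
    obtain ⟨B', hB', hvB⟩ := hBj
    rwa [← hv.injOn (Set.mem_univ B') (Set.mem_univ B) hvB]
  · intro hX
    rcases X.eq_empty_or_nonempty with rfl | hne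
    · exact ⟨0, by simp⟩
    obtain ⟨A, hA, hmax⟩ := Set.exists_max_image X v X.toFinite hne
    refine ⟨v A + 1, Set.ext fun k => ⟨?_, fun hk => ?_⟩⟩
    · rintro ⟨B, hB, rfl⟩
      exact Nat.lt_succ_of_le (hmax B hB)
    · have hkA : k ≤ v A := Nat.le_of_lt_succ hk
      obtain ⟨B, -, rfl⟩ := hv.surjOn (lt_of_le_of_lt hkA (hv.mapsTo (Set.mem_univ A)))
      exact ⟨B, hX A hA B hkA, rfl⟩

theorem final_iff_forall_le (hv : Set.BijOn v Set.univ {k | k < Fintype.card (DownSet α)}) :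
    Final v X ↔ ∀ A ∈ X, ∀ B, v A ≤ v B → B ∈ X := by
  constructor
  · rintro ⟨j, hj⟩ A hA B hAB
    have hjA : v A ∈ v '' X := ⟨A, hA, rfl⟩
    rw [hj] at hjA
    have hjB : v B ∈ v '' X := by
      rw [hj]
      exact ⟨hjA.1.trans hAB, hv.mapsTo (Set.mem_univ B)⟩
    obtain ⟨B', hB', hvB⟩ := hjB
    rwa [← hv.injOn (Set.mem_univ B') (Set.mem_univ B) hvB]
  · intro hX
    rcases X.eq_empty_or_nonempty with rfl | hne
    · exact ⟨Fintype.card (DownSet α), by ext; simp⟩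
    obtain ⟨A, hA, hmin⟩ := Set.exists_min_image X v X.toFinite hne
    refine ⟨v A, Set.ext fun k => ⟨?_, fun hk => ?_⟩⟩
    · rintro ⟨B, hB, rfl⟩
      exact ⟨hmin B hB, hv.mapsTo (Set.mem_univ B)⟩
    · obtain ⟨B, -, rfl⟩ := hv.surjOn hk.2
      exact ⟨B, hX A hA B hk.1, rfl⟩

end Segments

namespace DownSet

variable {α : Type*} [PartialOrder α]

section EraseInsert

variable [DecidableEq α]

def erase (A : DownSet α) (t : α) (ht : ∀ y ∈ A.1, t ≤ y → y = t) : DownSet α :=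
  ⟨A.1.erase t, by simpa only [coe_erase] using A.2.erase ht⟩

def insert (B : DownSet α) (t : α) (ht : ∀ y < t, y ∈ B.1) : DownSet α :=
  ⟨Insert.insert t B.1, by
    intro a b hba ha
    simp only [coe_insert, Set.mem_insert_iff, mem_coe] at ha ⊢
    rcases ha with rfl | ha
    · exact (eq_or_lt_of_le hba).imp id (ht b)
    · exact Or.inr (B.2 hba ha)⟩

@[simp]
theorem val_erase (A : DownSet α) (t : α) (ht) : (A.erase t ht).1 = A.1.erase t := rfl

end EraseInsert

variable [Fintype α]

instance [DecidableEq α] : OrderTop (DownSet α) :=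
  Subtype.orderTop (by simp [isLowerSet_univ])

theorem exists_mem_iff_lt_of_monotone {f : α → ℕ} (hf : Monotone f) (c : ℕ) :
    ∃ L : DownSet α, ∀ x, x ∈ L.1 ↔ f x < c :=
  ⟨⟨univ.filter (f · < c), fun a b hba ha => by
    simp only [coe_filter, mem_univ, true_and, Set.mem_ofPred_eq] at ha ⊢
    exact (hf hba).trans_lt ha⟩, fun x => by simp⟩

variable [DecidableRel ((· ≤ ·) : α → α → Prop)]

def notAbove (x : α) : DownSet α :=
  ⟨univ.filter (fun y => ¬ x ≤ y), by
    intro a b hba ha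
    simp only [coe_filter, mem_univ, true_and, Set.mem_ofPred_eq] at ha ⊢
    exact fun hxb => ha (hxb.trans hba)⟩

theorem mem_notAbove {x y : α} : y ∈ (notAbove x).1 ↔ ¬ x ≤ y := by
  simp [notAbove]

theorem mem_pd {x y : α} : y ∈ (pd x).1 ↔ y ≤ x := by
  simp [pd]

variable [DecidableEq α]

theorem exists_mem_iff_lt (t : α) : ∃ D : DownSet α, ∀ x, x ∈ D.1 ↔ x < t :=
  ⟨(pd t).erase t fun _ hy hty => le_antisymm (mem_pd.1 hy) hty, fun x => by
    simp [mem_pd, lt_iff_le_and_ne, and_comm]⟩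

theorem le_notAbove_iff {A : DownSet α} {x : α} : A ≤ notAbove x ↔ x ∉ A.1 :=
  ⟨fun h hx => mem_notAbove.1 (h hx) le_rfl,
    fun h _ hy => mem_notAbove.2 fun hxy => h (A.2 hxy hy)⟩

theorem pd_le_iff {A : DownSet α} {x : α} : pd x ≤ A ↔ x ∈ A.1 :=
  ⟨fun h => h (mem_pd.2 le_rfl), fun h _ hy => A.2 (mem_pd.1 hy) h⟩

end DownSet

open DownSet

section Key

variable {α : Type*} [PartialOrder α] {f : α → ℕ}

def key (f : α → ℕ) (A : DownSet α) : Colex (Finset ℕ) := toColex (A.1.image f)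

theorem key_mono [DecidableEq α] (f : α → ℕ) : Monotone (key f) := fun _ _ h =>
  Colex.toColex_le_toColex_of_subset (image_subset_image h)

theorem key_injective (hf : Injective f) : Injective (key f) := fun _ _ h =>
  Subtype.ext (image_injective hf (toColex.injective h))

theorem key_lt_key_iff (hf : Injective f) {A B : DownSet α} :
    key f B < key f A ↔ ∃ z ∈ A.1, z ∉ B.1 ∧ ∀ y ∈ B.1, y ∉ A.1 → f y < f z := by
  simp [key, Colex.toColex_lt_toColex_iff_exists_forall_lt, hf.eq_iff]

theorem key_lt_key_of_forall_lt (hf : Injective f) {A B : DownSet α} {z : α} (hzA : z ∈ A.1)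
    (hzB : z ∉ B.1) (h : ∀ y ∈ B.1, f y < f z) : key f B < key f A :=
  (key_lt_key_iff hf).2 ⟨z, hzA, hzB, fun y hy _ => h y hy⟩

theorem forall_lt_of_key_le {A B : DownSet α} {c : ℕ} (hA : ∀ x ∈ A.1, f x < c)
    (h : key f B ≤ key f A) : ∀ y ∈ B.1, f y < c := by
  simpa using Colex.forall_lt_mono h (by simpa using hA)

theorem forall_le_of_key_le {A B : DownSet α} {c : ℕ} (hA : ∀ x ∈ A.1, f x ≤ c)
    (h : key f B ≤ key f A) : ∀ y ∈ B.1, f y ≤ c := by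
  simpa using Colex.forall_le_mono h (by simpa using hA)

theorem key_lt_key_iff_of_erase [DecidableEq α] (hf : Injective f) {A B A' B' : DownSet α}
    {t : α} (htA : t ∈ A.1) (htB : t ∈ B.1) (hA : A'.1 = A.1.erase t) (hB : B'.1 = B.1.erase t) :
    key f B' < key f A' ↔ key f B < key f A := by
  rw [key, key, hA, hB, image_erase hf, image_erase hf, erase_eq, erase_eq]
  exact Colex.toColex_sdiff_lt_toColex_sdiff (singleton_subset_iff.2 (mem_image_of_mem f htB))
    (singleton_subset_iff.2 (mem_image_of_mem f htA))

theorem key_lt_key_of_not_subset {g : α → ℕ} (hf : Injective f)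
    (hle : ∀ x y, x ≤ y ↔ f x ≤ f y ∧ g x ≤ g y) {B D : DownSet α} {t : α}
    (hD : ∀ x, x ∈ D.1 ↔ x < t) (hB : ∀ y ∈ B.1, f y < f t)
    (hDB : ¬ D.1 ⊆ B.1) : key f B < key f D := by
  obtain ⟨z, hzD, hzB⟩ := not_subset.1 hDB
  refine (key_lt_key_iff hf).2 ⟨z, hzD, hzB, fun y hy hyD => lt_of_not_ge fun hzy => hzB ?_⟩
  have hyt : ¬ y ≤ t := fun hyt =>
    hyD ((hD y).2 (hyt.lt_of_ne fun h => (hB y hy).ne (congrArg f h)))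
  have hgty : g t < g y := lt_of_not_ge fun h => hyt ((hle y t).2 ⟨(hB y hy).le, h⟩)
  exact B.2 ((hle z y).2 ⟨hzy, ((hle z t).1 ((hD z).1 hzD).le).2.trans hgty.le⟩) hy

variable [Fintype α] [DecidableRel ((· ≤ ·) : α → α → Prop)]

theorem key_pd_lt_key_pd (hf : Injective f) (hmono : Monotone f) {x y : α} (h : f x < f y) :
    key f (pd x) < key f (pd y) :=
  key_lt_key_of_forall_lt hf (mem_pd.2 le_rfl) (fun hyx => (hmono (mem_pd.1 hyx)).not_gt h)
    fun _ hw => (hmono (mem_pd.1 hw)).trans_lt h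

theorem key_notAbove_lt_key_notAbove {g : α → ℕ} (hf : Injective f)
    (hle : ∀ x y, x ≤ y ↔ f x ≤ f y ∧ g x ≤ g y) {x y : α} (hgyx : g y < g x) :
    key f (notAbove y) < key f (notAbove x) := by
  refine (key_lt_key_iff hf).2 ⟨y, mem_notAbove.2 fun hxy => hgyx.not_ge ((hle x y).1 hxy).2,
    fun hy => mem_notAbove.1 hy le_rfl, fun w hyw hxw => lt_of_not_ge fun hfyw => ?_⟩
  rw [mem_notAbove] at hyw
  rw [mem_notAbove, not_not] at hxw
  exact hyw ((hle y w).2 ⟨hfyw, hgyx.le.trans ((hle x w).1 hxw).2⟩)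

end Key

section Closures

variable {α : Type*} [PartialOrder α] [Fintype α] [DecidableEq α]
  [DecidableRel ((· ≤ ·) : α → α → Prop)] {T : Set (DownSet α)} {C : DownSet α}

theorem mem_joinSet_iff (hT : ∀ A ∈ T, ∀ B ≤ A, B ∈ T) :
    C ∈ joinSet T ↔ T.Nonempty ∧ ∀ x ∈ C.1, pd x ∈ T := by
  constructor
  · rintro ⟨S, hST, hS, rfl⟩
    refine ⟨hS.elim fun A hA => ⟨A, hST hA⟩, ?_⟩
    refine sup'_induction hS id (p := fun C => ∀ x ∈ C.1, pd x ∈ T)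
      (fun A₁ h₁ A₂ h₂ x hx => (mem_union.1 hx).elim (h₁ x) (h₂ x))
      fun A hA x hx => hT A (hST hA) _ (pd_le_iff.2 hx)
  · rintro ⟨⟨A, hA⟩, hC⟩
    classical
    refine ⟨Insert.insert ⊥ (C.1.image pd), ?_, insert_nonempty _ _, ?_⟩
    · intro B hB
      simp only [coe_insert, coe_image, Set.mem_insert_iff, Set.mem_image, mem_coe] at hB
      rcases hB with rfl | ⟨x, hx, rfl⟩
      exacts [hT A hA ⊥ bot_le, hC x hx]
    refine le_antisymm (fun x hx => pd_le_iff.1 ?_) (sup'_le _ _ fun B hB => ?_)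
    · exact le_sup' id (mem_insert_of_mem (mem_image_of_mem pd hx))
    · rcases mem_insert.1 hB with rfl | hB
      · exact bot_le
      · obtain ⟨x, hx, rfl⟩ := mem_image.1 hB
        exact pd_le_iff.2 hx

theorem mem_meetSet_iff (hT : ∀ A ∈ T, ∀ B, A ≤ B → B ∈ T) :
    C ∈ meetSet T ↔ T.Nonempty ∧ ∀ x ∉ C.1, notAbove x ∈ T := by
  constructor
  · rintro ⟨S, hST, hS, rfl⟩
    refine ⟨hS.elim fun A hA => ⟨A, hST hA⟩, ?_⟩
    refine inf'_induction hS id (p := fun C => ∀ x ∉ C.1, notAbove x ∈ T)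
      (fun A₁ h₁ A₂ h₂ x hx => (not_and_or.1 (mt mem_inter.2 hx)).elim (h₁ x) (h₂ x))
      fun A hA x hx => hT A (hST hA) _ (le_notAbove_iff.2 hx)
  · rintro ⟨⟨A, hA⟩, hC⟩
    classical
    refine ⟨Insert.insert ⊤ ((univ.filter (· ∉ C.1)).image notAbove), ?_, insert_nonempty _ _, ?_⟩
    · intro B hB
      simp only [coe_insert, coe_image, coe_filter, Set.mem_insert_iff, Set.mem_image,
        Set.mem_ofPred_eq, mem_univ, true_and] at hB
      rcases hB with rfl | ⟨x, hx, rfl⟩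
      exacts [hT A hA ⊤ le_top, hC x hx]
    refine le_antisymm (le_inf' _ _ fun B hB => ?_) fun x hx => by_contra fun hxC => ?_
    · rcases mem_insert.1 hB with rfl | hB
      · exact le_top
      · obtain ⟨x, hx, rfl⟩ := mem_image.1 hB
        exact le_notAbove_iff.2 (mem_filter.1 hx).2
    · have hxC' : x ∈ univ.filter (· ∉ C.1) := by simpa using hxC
      exact le_notAbove_iff.1 (inf'_le id (mem_insert_of_mem (mem_image_of_mem notAbove hxC'))) hx

end Closures

section Completeness

variable {α : Type*} [PartialOrder α] [Fintype α] [DecidableEq α]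
  [DecidableRel ((· ≤ ·) : α → α → Prop)] {f : α → ℕ} {T : Set (DownSet α)}

theorem initial_joinSet (hf : Injective f) (hmono : Monotone f)
    (hT : Initial (rankBy (key f)) T) : Initial (rankBy (key f)) (joinSet T) := by
  have hv := bijOn_rankBy (key_injective hf)
  simp only [initial_iff_forall_le hv, rankBy_le_rankBy_iff] at hT ⊢
  have hT' : ∀ A ∈ T, ∀ B ≤ A, B ∈ T := fun A hA B hBA => hT A hA B (key_mono f hBA)
  simp only [mem_joinSet_iff hT']
  rintro C ⟨hne, hC⟩ C' hC'C
  refine ⟨hne, fun u hu => by_contra fun hpu => ?_⟩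
  have huC : u ∉ C.1 := fun h => hpu (hC u h)
  have hlt : key f C' < key f C := hC'C.lt_of_ne fun h => huC (key_injective hf h ▸ hu)
  obtain ⟨z, hzC, -, hz⟩ := (key_lt_key_iff hf).1 hlt
  exact hpu (hT _ (hC z hzC) _ (key_pd_lt_key_pd hf hmono (hz u hu huC)).le)

theorem final_meetSet {g : α → ℕ} (hf : Injective f) (hle : ∀ x y, x ≤ y ↔ f x ≤ f y ∧ g x ≤ g y)
    (hT : Final (rankBy (key f)) T) : Final (rankBy (key f)) (meetSet T) := by
  have hv := bijOn_rankBy (key_injective hf)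
  simp only [final_iff_forall_le hv, rankBy_le_rankBy_iff] at hT ⊢
  have hT' : ∀ A ∈ T, ∀ B, A ≤ B → B ∈ T := fun A hA B hAB => hT A hA B (key_mono f hAB)
  simp only [mem_meetSet_iff hT']
  rintro C ⟨hne, hC⟩ C' hCC'
  refine ⟨hne, fun u hu => by_contra fun hnu => ?_⟩
  have huC : u ∈ C.1 := by_contra fun h => hnu (hC u h)
  have hlt : key f C < key f C' := hCC'.lt_of_ne fun h => hu (key_injective hf h ▸ huC)
  obtain ⟨z, hzC', hzC, hz⟩ := (key_lt_key_iff hf).1 hlt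
  have hguz : g z < g u :=
    lt_of_not_ge fun h => hu (C'.2 ((hle u z).2 ⟨(hz u huC hu).le, h⟩) hzC')
  exact hnu (hT _ (hC z hzC) _ (key_notAbove_lt_key_notAbove hf hle hguz).le)

end Completeness

section Chains

variable {α : Type*} [Fintype α] [DecidableEq α] (f g : α → ℕ)

def chainsWithTop (t : α) : Finset (Finset α) :=
  {C | t ∈ C ∧ (∀ a ∈ C, f a ≤ f t ∧ g t ≤ g a) ∧
    ∀ a ∈ C, ∀ b ∈ C, (f a ≤ f b ∧ g b ≤ g a) ∨ (f b ≤ f a ∧ g a ≤ g b)}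

def chainsBelow (t : α) : Finset (Finset α) :=
  {C | (∀ a ∈ C, f a < f t ∧ g t < g a) ∧
    ∀ a ∈ C, ∀ b ∈ C, (f a ≤ f b ∧ g b ≤ g a) ∨ (f b ≤ f a ∧ g a ≤ g b)}

theorem chainCount_eq_card_chainsWithTop (t : α) :
    chainCount (fun x y => f x ≤ f y) (fun x y => g x ≤ g y) t = #(chainsWithTop f g t) := by
  rw [chainCount, ← Set.ncard_coe_finset]
  congr 1
  ext C
  simp [chainsWithTop, le'']

variable {f g}

theorem card_chainsWithTop (hf : Injective f) (hg : Injective g) (t : α) :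
    #(chainsWithTop f g t) = #(chainsBelow f g t) := by
  refine card_nbij' (·.erase t) (insert t) (fun C hC => ?_) (fun C hC => ?_)
    (fun C hC => insert_erase (mem_filter.1 hC).2.1)
    (fun C hC => erase_insert fun htC => lt_irrefl _ ((mem_filter.1 hC).2.1 t htC).1)
  · obtain ⟨htC, htop, hchain⟩ := (mem_filter.1 hC).2
    refine mem_filter.2 ⟨mem_univ _, fun a ha => ?_, fun a ha b hb =>
      hchain a (mem_of_mem_erase ha) b (mem_of_mem_erase hb)⟩
    obtain ⟨hat, haC⟩ := mem_erase.1 ha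
    exact ⟨(htop a haC).1.lt_of_ne (hf.ne hat), (htop a haC).2.lt_of_ne (hg.ne hat).symm⟩
  · obtain ⟨hbelow, hchain⟩ := (mem_filter.1 hC).2
    have htop : ∀ a ∈ insert t C, f a ≤ f t ∧ g t ≤ g a := by
      simp only [mem_insert, forall_eq_or_imp, le_refl, and_self, true_and]
      exact fun a ha => ⟨(hbelow a ha).1.le, (hbelow a ha).2.le⟩
    refine mem_filter.2 ⟨mem_univ _, mem_insert_self t C, htop, fun a ha b hb => ?_⟩
    rcases mem_insert.1 ha with rfl | haC
    · exact Or.inr (htop b hb)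
    rcases mem_insert.1 hb with rfl | hbC
    · exact Or.inl (htop a ha)
    · exact hchain a haC b hbC

theorem card_chainsBelow (hf : Injective f) (t : α) :
    #(chainsBelow f g t) = 1 + ∑ a ∈ {a | f a < f t ∧ g t < g a}, #(chainsWithTop f g a) := by
  have hdecomp : chainsBelow f g t =
      insert ∅ (({a | f a < f t ∧ g t < g a} : Finset α).biUnion (chainsWithTop f g)) := by
    ext C
    simp only [chainsBelow, chainsWithTop, mem_insert, mem_biUnion, mem_filter, mem_univ, true_and]
    constructor
    · rintro ⟨hbelow, hchain⟩
      rcases C.eq_empty_or_nonempty with rfl | hne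
      · exact Or.inl rfl
      obtain ⟨a, haC, hmax⟩ := C.exists_max_image f hne
      refine Or.inr ⟨a, hbelow a haC, haC, fun b hb => ?_, hchain⟩
      rcases hchain b hb a haC with h | h
      · exact h
      · rw [hf (le_antisymm h.1 (hmax b hb))]
        exact ⟨le_rfl, le_rfl⟩
    · rintro (rfl | ⟨a, ⟨hfa, hga⟩, -, htop, hchain⟩)
      · simp
      · exact ⟨fun b hb => ⟨(htop b hb).1.trans_lt hfa, hga.trans_le (htop b hb).2⟩, hchain⟩
  rw [hdecomp, card_insert_of_notMem, card_biUnion, add_comm]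
  · intro a _ b _ hab
    refine disjoint_left.2 fun C haC hbC => hab (hf (le_antisymm ?_ ?_))
    · exact ((mem_filter.1 hbC).2.2.1 a (mem_filter.1 haC).2.1).1
    · exact ((mem_filter.1 haC).2.2.1 b (mem_filter.1 hbC).2.1).1
  · simp [chainsWithTop]

theorem chainCount_eq_one_add_sum (hf : Injective f) (hg : Injective g) (t : α) :
    chainCount (fun x y => f x ≤ f y) (fun x y => g x ≤ g y) t =
      1 + ∑ a ∈ {a | f a < f t ∧ g t < g a},
        chainCount (fun x y => f x ≤ f y) (fun x y => g x ≤ g y) a := by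
  simp only [chainCount_eq_card_chainsWithTop]
  rw [card_chainsWithTop hf hg, card_chainsBelow hf]

end Chains

section Counting

variable {α : Type*} [PartialOrder α] [Fintype α] [DecidableEq α] {f g : α → ℕ}

theorem chainCount_add_vval (hf : Injective f) (hg : Injective g)
    (hle : ∀ x y, x ≤ y ↔ f x ≤ f y ∧ g x ≤ g y) {D L : DownSet α} {t : α}
    (hD : ∀ x, x ∈ D.1 ↔ x < t) (hL : ∀ x, x ∈ L.1 ↔ f x < f t) :
    chainCount (fun x y => f x ≤ f y) (fun x y => g x ≤ g y) t +
        vval (chainCount (fun x y => f x ≤ f y) (fun x y => g x ≤ g y)) D =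
      1 + vval (chainCount (fun x y => f x ≤ f y) (fun x y => g x ≤ g y)) L := by
  have hDL : D.1 ⊆ L.1 := fun x hx =>
    (hL x).2 ((((hle x t).1 ((hD x).1 hx).le).1).lt_of_ne (hf.ne ((hD x).1 hx).ne))
  have hdiff : ({a | f a < f t ∧ g t < g a} : Finset α) = L.1 \ D.1 := by
    ext a
    simp only [mem_filter, mem_univ, true_and, mem_sdiff, hL, hD, and_congr_right_iff]
    intro hfa
    have hat : a ≠ t := fun h => hfa.ne (congrArg f h)
    rw [lt_iff_le_and_ne (a := a), and_iff_left hat, hle, and_iff_right hfa.le, not_le]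
  rw [chainCount_eq_one_add_sum hf hg, hdiff, vval, vval, ← sum_sdiff hDL]
  ring

theorem card_key_lt_and_notMem (hf : Injective f) {A L : DownSet α} {t : α} (htA : t ∈ A.1)
    (htop : ∀ x ∈ A.1, f x ≤ f t) (hL : ∀ x, x ∈ L.1 ↔ f x < f t) :
    #{B | key f B < key f A ∧ t ∉ B.1} = rankBy (key f) L + 1 := by
  rw [← card_filter_le_eq_rankBy_add_one (key_injective hf)]
  congr 1
  ext B
  simp only [mem_filter, mem_univ, true_and]
  constructor
  · rintro ⟨hBA, htB⟩
    refine key_mono f fun y hy => (hL y).2 ((forall_le_of_key_le htop hBA.le y hy).lt_of_ne ?_)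
    exact hf.ne fun h => htB (h ▸ hy)
  · intro hBL
    have hB := forall_lt_of_key_le (fun x hx => (hL x).1 hx) hBL
    exact ⟨key_lt_key_of_forall_lt hf htA (fun h => lt_irrefl _ (hB t h)) hB,
      fun h => lt_irrefl _ (hB t h)⟩

theorem card_key_lt_and_mem (hf : Injective f) (hmono : Monotone f) {A A' D : DownSet α} {t : α}
    (htA : t ∈ A.1) (htop : ∀ x ∈ A.1, f x ≤ f t) (hA' : A'.1 = A.1.erase t)
    (hD : ∀ x, x ∈ D.1 ↔ x < t) :
    #{B | key f B < key f A ∧ t ∈ B.1} = #{B | key f B < key f A' ∧ D.1 ⊆ B.1} := by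
  have hA'lt : ∀ x ∈ A'.1, f x < f t := fun x hx => by
    rw [hA', mem_erase] at hx
    exact (htop x hx.2).lt_of_ne (hf.ne hx.1)
  refine card_bij'
    (fun B hB => B.erase t fun y hy hty =>
      hf (le_antisymm (forall_le_of_key_le htop (mem_filter.1 hB).2.1.le y hy) (hmono hty)))
    (fun B hB => B.insert t fun y hy => (mem_filter.1 hB).2.2 ((hD y).2 hy))
    (fun B hB => ?_) (fun B hB => ?_)
    (fun B hB => Subtype.ext (insert_erase (mem_filter.1 hB).2.2))
    (fun B hB => Subtype.ext (erase_insert fun htB =>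
      lt_irrefl _ (forall_lt_of_key_le hA'lt (mem_filter.1 hB).2.1.le t htB)))
  · obtain ⟨hBA, htB⟩ := (mem_filter.1 hB).2
    refine mem_filter.2 ⟨mem_univ _, (key_lt_key_iff_of_erase hf htA htB hA' rfl).2 hBA,
      fun x hx => ?_⟩
    rw [val_erase, mem_erase]
    exact ⟨((hD x).1 hx).ne, B.2 ((hD x).1 hx).le htB⟩
  · obtain ⟨hBA', -⟩ := (mem_filter.1 hB).2
    have htB : t ∉ B.1 := fun htB => lt_irrefl _ (forall_lt_of_key_le hA'lt hBA'.le t htB)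
    refine mem_filter.2 ⟨mem_univ _, ?_, mem_insert_self t B.1⟩
    exact (key_lt_key_iff_of_erase hf htA (mem_insert_self t B.1) hA'
      (erase_insert htB).symm).1 hBA'

theorem card_key_lt_and_not_subset (hf : Injective f) (hle : ∀ x y, x ≤ y ↔ f x ≤ f y ∧ g x ≤ g y)
    {A' D : DownSet α} {t : α} (hA'lt : ∀ x ∈ A'.1, f x < f t) (hDA' : D ≤ A')
    (hD : ∀ x, x ∈ D.1 ↔ x < t) :
    #{B | key f B < key f A' ∧ ¬ D.1 ⊆ B.1} = rankBy (key f) D := by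
  congr 1
  ext B
  simp only [mem_filter, mem_univ, true_and]
  refine ⟨fun ⟨hBA', hDB⟩ => key_lt_key_of_not_subset hf hle hD
    (forall_lt_of_key_le hA'lt hBA'.le) hDB, fun hBD => ?_⟩
  exact ⟨hBD.trans_le (key_mono f hDA'), fun hDB => (key_mono f hDB).not_gt hBD⟩

theorem rankBy_key_add_rankBy_key (hf : Injective f) (hle : ∀ x y, x ≤ y ↔ f x ≤ f y ∧ g x ≤ g y)
    {A A' D L : DownSet α} {t : α} (htA : t ∈ A.1) (htop : ∀ x ∈ A.1, f x ≤ f t)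
    (hA' : A'.1 = A.1.erase t) (hD : ∀ x, x ∈ D.1 ↔ x < t) (hL : ∀ x, x ∈ L.1 ↔ f x < f t) :
    rankBy (key f) A + rankBy (key f) D = rankBy (key f) L + 1 + rankBy (key f) A' := by
  have hA'lt : ∀ x ∈ A'.1, f x < f t := fun x hx => by
    rw [hA', mem_erase] at hx
    exact (htop x hx.2).lt_of_ne (hf.ne hx.1)
  have hDA' : D ≤ A' := fun x hx => by
    rw [hA', mem_erase]
    exact ⟨((hD x).1 hx).ne, A.2 ((hD x).1 hx).le htA⟩
  have hsplitA : #{B | key f B < key f A ∧ t ∈ B.1} + #{B | key f B < key f A ∧ t ∉ B.1} =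
      rankBy (key f) A := by
    rw [rankBy, ← card_filter_add_card_filter_not (s := {B | key f B < key f A}) (t ∈ ·.1),
      filter_filter, filter_filter]
  have hsplitA' : #{B | key f B < key f A' ∧ D.1 ⊆ B.1} +
      #{B | key f B < key f A' ∧ ¬ D.1 ⊆ B.1} = rankBy (key f) A' := by
    rw [rankBy, ← card_filter_add_card_filter_not (s := {B | key f B < key f A'}) (D.1 ⊆ ·.1),
      filter_filter, filter_filter]
  rw [card_key_lt_and_notMem hf htA htop hL,
    card_key_lt_and_mem hf (fun x y h => ((hle x y).1 h).1) htA htop hA' hD] at hsplitA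
  rw [card_key_lt_and_not_subset hf hle hA'lt hDA' hD] at hsplitA'
  omega

end Counting

theorem vval_chainCount_eq_rankBy {α : Type*} [PartialOrder α] [Fintype α] [DecidableEq α]
    [DecidableRel ((· ≤ ·) : α → α → Prop)] {f g : α → ℕ} (hf : Injective f) (hg : Injective g)
    (hle : ∀ x y, x ≤ y ↔ f x ≤ f y ∧ g x ≤ g y) (A : DownSet α) :
    vval (chainCount (fun x y => f x ≤ f y) (fun x y => g x ≤ g y)) A = rankBy (key f) A := by
  have hmono : Monotone f := fun x y h => ((hle x y).1 h).1
  suffices ∀ n, ∀ A : DownSet α, (∀ x ∈ A.1, f x < n) →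
      vval (chainCount (fun x y => f x ≤ f y) (fun x y => g x ≤ g y)) A = rankBy (key f) A from
    this _ A fun x _ => Nat.lt_succ_of_le (le_sup (f := f) (mem_univ x))
  intro n
  induction n with
  | zero =>
    intro A hA
    have hA0 : A.1 = ∅ := eq_empty_of_forall_notMem fun x hx => Nat.not_lt_zero _ (hA x hx)
    have hbot : ∀ B, key f A ≤ key f B := fun B => key_mono f (by simp [LE.le, hA0])
    simp [vval, hA0, rankBy, fun B => (hbot B).not_gt]
  | succ n ih =>
    intro A hA
    by_cases hlt : ∀ x ∈ A.1, f x < n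
    · exact ih A hlt
    obtain ⟨t, htA, hnt⟩ : ∃ t ∈ A.1, n ≤ f t := by simpa using hlt
    have htop : ∀ x ∈ A.1, f x ≤ f t := fun x hx => by have := hA x hx; omega
    obtain ⟨A', hA'⟩ : ∃ A' : DownSet α, A'.1 = A.1.erase t :=
      ⟨A.erase t fun y hy hty => hf (le_antisymm (htop y hy) (hmono hty)), rfl⟩
    obtain ⟨D, hD⟩ := exists_mem_iff_lt t
    obtain ⟨L, hL⟩ := exists_mem_iff_lt_of_monotone hmono (f t)
    have hbound : ∀ x, f x < f t → f x < n := fun x hx => by have := hA t htA; omega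
    have ihA' := ih A' fun x hx => by
      rw [hA', mem_erase] at hx
      exact hbound x ((htop x hx.2).lt_of_ne (hf.ne hx.1))
    have ihD := ih D fun x hx =>
      hbound x ((hmono ((hD x).1 hx).le).lt_of_ne (hf.ne ((hD x).1 hx).ne))
    have ihL := ih L fun x hx => hbound x ((hL x).1 hx)
    have hrank := rankBy_key_add_rankBy_key hf hle htA htop hA' hD hL
    have hweight := chainCount_add_vval hf hg hle hD hL
    have hsum := sum_erase_add A.1 (chainCount (fun x y => f x ≤ f y) (fun x y => g x ≤ g y)) htA
    rw [← hA'] at hsum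
    simp only [vval] at ihA' ihD ihL hweight ⊢
    omega

/-- The chain-counting valuation associated to a realizer is complete: join-closures of
initial segments are initial segments and meet-closures of final segments are final. -/
theorem stmt12 (le1 le2 : P → P → Prop) (h : IsRealizer le1 le2) :
    (∀ T, Initial (vval (chainCount le1 le2)) T →
      Initial (vval (chainCount le1 le2)) (joinSet T)) ∧
    (∀ T, Final (vval (chainCount le1 le2)) T →
      Final (vval (chainCount le1 le2)) (meetSet T)) := by
  obtain ⟨f, g, hf, hg, rfl, rfl⟩ := h.exists_coords
  have hle : ∀ x y, x ≤ y ↔ f x ≤ f y ∧ g x ≤ g y := h.2.2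
  have hv : vval (chainCount (fun x y => f x ≤ f y) (fun x y => g x ≤ g y)) = rankBy (key f) :=
    funext (vval_chainCount_eq_rankBy hf hg hle)
  rw [hv]
  exact ⟨fun T => initial_joinSet hf fun x y hxy => ((hle x y).1 hxy).1,
    fun T => final_meetSet hf hle⟩
end

section
/- Let P be a finite poset with realizer {Λ₁, Λ₂}. Then the number of downsets of P equals one plus the number of nonempty chains in the complementary poset Q (x ≤' y iff x ≤_{Λ₁} y and y ≤_{Λ₂} x, or x = y). -/
/-!
A downset of a finite poset is the lower closure of its set of maximal elements, and these
form an antichain; conversely every antichain is the set of maximal elements of its lower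
closure. So downsets correspond to antichains of `P`, the empty downset to the empty antichain.
For a realizer `{Λ₁, Λ₂}`, two distinct elements are incomparable in `P` exactly when they
are ordered oppositely by `Λ₁` and `Λ₂`, i.e. comparable in `Q`; hence the antichains of `P`
are the chains of `Q`.
-/

open Finset

variable (P : Type*) [PartialOrder P] [Fintype P] [DecidableEq P]

variable {P}

variable [DecidableRel ((· ≤ ·) : P → P → Prop)]

namespace DownSet

variable {α : Type*} [PartialOrder α]

open Classical in
noncomputable def maximals (A : DownSet α) : Finset α := A.1.filter (Maximal (· ∈ A.1))

lemma mem_maximals {A : DownSet α} {x : α} : x ∈ A.maximals ↔ Maximal (· ∈ A.1) x := by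
  simp only [maximals, Finset.mem_filter, and_iff_right_iff_imp]
  exact Maximal.prop

lemma isAntichain_maximals (A : DownSet α) : IsAntichain (· ≤ ·) (A.maximals : Set α) := by
  convert setOfPred_maximal_antichain (· ∈ A.1) using 1
  ext x
  exact mem_maximals

lemma mem_iff_exists_mem_maximals_le (A : DownSet α) {x : α} :
    x ∈ A.1 ↔ ∃ m ∈ A.maximals, x ≤ m := by
  refine ⟨fun hx => ?_, fun ⟨m, hm, hxm⟩ => A.2 hxm (mem_maximals.1 hm).prop⟩
  obtain ⟨m, hxm, hm⟩ := A.1.exists_le_maximal hx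
  exact ⟨m, mem_maximals.2 hm, hxm⟩

lemma maximals_injective : Function.Injective (maximals : DownSet α → Finset α) := by
  intro A B h
  apply Subtype.ext
  ext x
  rw [mem_iff_exists_mem_maximals_le, mem_iff_exists_mem_maximals_le, h]

variable [Fintype α]

open Classical in
noncomputable def ofLowerSet (s : LowerSet α) : DownSet α :=
  ⟨(s : Set α).toFinset, by simpa only [Set.coe_toFinset] using s.lower⟩

lemma mem_ofLowerSet {s : LowerSet α} {x : α} : x ∈ (ofLowerSet s).1 ↔ x ∈ s := by
  simp [ofLowerSet]

lemma maximals_ofLowerSet_lowerClosure {C : Finset α} (hC : IsAntichain (· ≤ ·) (C : Set α)) :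
    (ofLowerSet (lowerClosure (C : Set α))).maximals = C := by
  ext x
  simp_rw [mem_maximals, mem_ofLowerSet]
  exact hC.maximal_mem_lowerClosure_iff_mem

lemma range_maximals :
    Set.range (maximals : DownSet α → Finset α) =
      {C : Finset α | IsAntichain (· ≤ ·) (C : Set α)} := by
  ext C
  refine ⟨?_, fun hC => ⟨_, maximals_ofLowerSet_lowerClosure hC⟩⟩
  rintro ⟨A, rfl⟩
  exact A.isAntichain_maximals

lemma card_eq_ncard_isAntichain :
    Fintype.card (DownSet α) = {C : Finset α | IsAntichain (· ≤ ·) (C : Set α)}.ncard := by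
  rw [← range_maximals, Set.ncard_range_of_injective maximals_injective, Nat.card_eq_fintype_card]

end DownSet

namespace IsRealizer

variable {α : Type*} [PartialOrder α] {le1 le2 : α → α → Prop}

lemma le''_or_le''_iff (h : IsRealizer le1 le2) {a b : α} (hab : a ≠ b) :
    le'' le1 le2 a b ∨ le'' le1 le2 b a ↔ ¬ a ≤ b ∧ ¬ b ≤ a := by
  obtain ⟨h1, h2, hle⟩ := h
  have := h1.total a b
  have := h2.total a b
  have := h1.antisymm a b
  have := h2.antisymm a b
  simp only [le'', hle]
  tauto

lemma forall_le''_or_le''_iff_isAntichain (h : IsRealizer le1 le2) {s : Set α} :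
    (∀ a ∈ s, ∀ b ∈ s, le'' le1 le2 a b ∨ le'' le1 le2 b a) ↔
      IsAntichain (· ≤ ·) s := by
  refine ⟨fun hs a ha b hb hab => ((h.le''_or_le''_iff hab).1 (hs a ha b hb)).1,
    fun hs a ha b hb => ?_⟩
  obtain rfl | hab := eq_or_ne a b
  · exact Or.inl ⟨h.1.refl a, h.2.1.refl a⟩
  · exact (h.le''_or_le''_iff hab).2 ⟨hs ha hb hab, hs hb ha hab.symm⟩

end IsRealizer

/-- The number of downsets of `P` equals one plus the number of nonempty chains in
the complementary poset `Q`. -/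
theorem stmt17 (le1 le2 : P → P → Prop) (h : IsRealizer le1 le2) :
    Fintype.card (DownSet P) =
      1 + Set.ncard {C : Finset P | C.Nonempty ∧
        ∀ a ∈ C, ∀ b ∈ C, le'' le1 le2 a b ∨ le'' le1 le2 b a} := by
  have hchains : {C : Finset P | C.Nonempty ∧
      ∀ a ∈ C, ∀ b ∈ C, le'' le1 le2 a b ∨ le'' le1 le2 b a} =
      {C : Finset P | IsAntichain (· ≤ ·) (C : Set P)} \ {∅} := by
    ext C
    rw [Set.mem_ofPred_eq, Set.mem_sdiff, Set.mem_ofPred_eq,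
      ← h.forall_le''_or_le''_iff_isAntichain]
    simp [Finset.nonempty_iff_ne_empty, and_comm]
  rw [DownSet.card_eq_ncard_isAntichain, hchains,
    ← Set.ncard_sdiff_singleton_add_one (a := ∅) (by simp), add_comm]
end
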